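/- arXiv:0906.0291 — 7 statements merged into one kernel-verified Lean document; each statement's English description precedes it below -/
import Mathlib

section
/- Let f : [0,1] → ℝ be continuous, θ ∈ [0,1], and ε > 0. Then there exists J such that for every natural number j ≥ J, every t ∈ [j, j+1], and every continuous X : [0, θt] → ℝ satisfying |X(s) − j·f(s/j)| ≤ εj for all s ∈ [0, θj] and |X(s) − X(θj)| ≤ εj/2 for all s ∈ [θj, θt], one has |X(s) − t·f(s/t)| ≤ 2εt for all s ∈ [0, θt]. -/
/-!
Put `r = min s (θ j)`. The hypotheses keep `X s` within `εj/2` of `X r` and `X r` within `εj` of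
`j f (r/j)`. Since `r/j` and `s/t` differ by at most `1/t`, uniform continuity and boundedness of
`f` on `[0,1]` keep `j f (r/j)` within `εj/2` of `t f (s/t)` once `j` is large, and
`2εj ≤ 2εt`.
-/

open Set Filter

section LinearOrderedField

variable {K : Type*} [Field K] [LinearOrder K] [IsStrictOrderedRing K]

lemma abs_min_div_sub_div_le {θ s j t : K} (hθ : θ ∈ Icc 0 1) (hj : 0 < j)
    (ht : t ∈ Icc j (j + 1)) (hs : s ∈ Icc 0 (θ * t)) :
    |min s (θ * j) / j - s / t| ≤ 1 / t := by
  obtain ⟨hθ0, hθ1⟩ := hθ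
  obtain ⟨hjt, htj⟩ := ht
  obtain ⟨hs0, hst⟩ := hs
  have ht0 : 0 < t := hj.trans_le hjt
  have hlower : s / t ≤ min s (θ * j) / j := by
    rw [div_le_div_iff₀ ht0 hj]
    rcases min_cases s (θ * j) with ⟨h, _⟩ | ⟨h, _⟩ <;> rw [h] <;> nlinarith
  have hupper : min s (θ * j) / j ≤ (1 + s) / t := by
    rw [div_le_div_iff₀ hj ht0]
    rcases min_cases s (θ * j) with ⟨h, _⟩ | ⟨h, _⟩ <;> rw [h] <;>
      nlinarith [mul_le_mul_of_nonneg_left (mul_le_mul_of_nonneg_left htj hθ0) hj.le]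
  rw [abs_of_nonneg (sub_nonneg.2 hlower), sub_le_iff_le_add, ← add_div]
  exact hupper

lemma abs_mul_sub_mul_le {j t a b : K} (hj : 0 ≤ j) :
    |j * a - t * b| ≤ j * |a - b| + |t - j| * |b| := by
  calc |j * a - t * b| = |j * (a - b) - (t - j) * b| := by congr 1; ring
    _ ≤ |j * (a - b)| + |(t - j) * b| := abs_sub _ _
    _ = j * |a - b| + |t - j| * |b| := by rw [abs_mul, abs_mul, abs_of_nonneg hj]

end LinearOrderedField

lemma eventually_abs_rescale_sub_rescale_le {f : ℝ → ℝ} (hf : ContinuousOn f (Icc 0 1)) {η : ℝ}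
    (hη : 0 < η) :
    ∀ᶠ j : ℕ in atTop, 0 < j ∧ ∀ t ∈ Icc (j : ℝ) (j + 1), ∀ u ∈ Icc (0 : ℝ) 1,
      ∀ v ∈ Icc (0 : ℝ) 1, |u - v| ≤ 1 / t → |j * f u - t * f v| ≤ η * j := by
  obtain ⟨M, hM⟩ := isCompact_Icc.exists_bound_of_continuousOn hf
  obtain ⟨δ, hδ, hfδ⟩ := Metric.uniformContinuousOn_iff_le.1
    (isCompact_Icc.uniformContinuousOn_of_continuous hf) (η / 2) (by positivity)
  filter_upwards [tendsto_natCast_atTop_atTop.eventually_ge_atTop (1 : ℝ),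
    tendsto_natCast_atTop_atTop.eventually_ge_atTop (1 / δ),
    tendsto_natCast_atTop_atTop.eventually_ge_atTop (2 * M / η)] with j hj1 hδj hMj
  have hj0 : (0 : ℝ) < j := by linarith
  refine ⟨Nat.cast_pos.1 hj0, fun t ⟨hjt, htj⟩ u hu v hv huv => ?_⟩
  have hfuv : |f u - f v| ≤ η / 2 := by
    refine hfδ u hu v hv ?_
    rw [Real.dist_eq]
    calc |u - v| ≤ 1 / t := huv
      _ ≤ 1 / j := one_div_le_one_div_of_le hj0 hjt
      _ ≤ δ := (one_div_le hj0 hδ).2 hδj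
  have hM' : M ≤ η / 2 * j := by rw [div_le_iff₀ hη] at hMj; linarith
  calc |j * f u - t * f v| ≤ j * |f u - f v| + |t - j| * |f v| := abs_mul_sub_mul_le hj0.le
    _ ≤ j * (η / 2) + 1 * M := by
        gcongr
        · rw [abs_of_nonneg (by linarith)]; linarith
        · exact hM v hv
    _ ≤ η * j := by linarith

/-- Deterministic tube-reduction inclusion from Proposition 11: for `j` large, a path lying
in the `εj`-tube around the `j`-rescaled copy of `f` up to time `θj`, whose increments after
time `θj` are at most `εj/2`, lies in the `2εt`-tube around the `t`-rescaled copy of `f` up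
to time `θt`, for all `t ∈ [j, j+1]`. -/
theorem tube_reduction
    (f : ℝ → ℝ) (hf : ContinuousOn f (Set.Icc (0 : ℝ) 1))
    (θ : ℝ) (hθ : θ ∈ Set.Icc (0 : ℝ) 1) (ε : ℝ) (hε : 0 < ε) :
    ∃ J : ℕ, ∀ j : ℕ, J ≤ j → ∀ t : ℝ, t ∈ Set.Icc (j : ℝ) (j + 1) →
      ∀ X : ℝ → ℝ, ContinuousOn X (Set.Icc 0 (θ * t)) →
      (∀ s ∈ Set.Icc (0 : ℝ) (θ * j), |X s - j * f (s / j)| ≤ ε * j) →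
      (∀ s ∈ Set.Icc (θ * (j : ℝ)) (θ * t), |X s - X (θ * j)| ≤ ε * j / 2) →
      ∀ s ∈ Set.Icc (0 : ℝ) (θ * t), |X s - t * f (s / t)| ≤ 2 * ε * t := by
  obtain ⟨J, hJ⟩ := eventually_atTop.1 (eventually_abs_rescale_sub_rescale_le hf (half_pos hε))
  refine ⟨J, fun j hj t ht X _ hbefore hafter s hs => ?_⟩
  obtain ⟨hj_pos, hrescale⟩ := hJ j hj
  have hj0 : (0 : ℝ) < j := Nat.cast_pos.2 hj_pos
  have ht0 : 0 < t := hj0.trans_le ht.1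
  set r := min s (θ * j)
  have hr : r ∈ Icc 0 (θ * j) := ⟨le_min hs.1 (mul_nonneg hθ.1 hj0.le), min_le_right _ _⟩
  have hjump : |X s - X r| ≤ ε * j / 2 := by
    rcases min_cases s (θ * j) with ⟨h, _⟩ | ⟨h, hlt⟩
    · rw [show r = s from h, sub_self, abs_zero]; positivity
    · rw [show r = θ * j from h]; exact hafter s ⟨hlt.le, hs.2⟩
  have hr_div : r / j ∈ Icc (0 : ℝ) 1 :=
    ⟨div_nonneg hr.1 hj0.le, (div_le_iff₀ hj0).2 (by nlinarith [hr.2, hθ.2])⟩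
  have hs_div : s / t ∈ Icc (0 : ℝ) 1 :=
    ⟨div_nonneg hs.1 ht0.le, (div_le_one ht0).2 (hs.2.trans (mul_le_of_le_one_left ht0.le hθ.2))⟩
  calc |X s - t * f (s / t)|
      ≤ |X s - X r| + (|X r - j * f (r / j)| + |j * f (r / j) - t * f (s / t)|) :=
        (abs_sub_le _ _ _).trans (add_le_add le_rfl (abs_sub_le _ _ _))
    _ ≤ ε * j / 2 + (ε * j + ε / 2 * j) := by
        gcongr
        · exact hbefore r hr
        · exact hrescale t ht _ hr_div _ hs_div (abs_min_div_sub_div_le hθ hj0 ht hs)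
    _ ≤ 2 * ε * t := by nlinarith [ht.1]
end

section
/- Fix θ ∈ (0,1] and a natural number N ≥ 1. Define F_N ⊆ C([0,θ], ℝ) as the set of continuous f : [0,θ] → ℝ such that there exist a natural number n ≥ N and u, s ∈ [0,θ] with |u − s| ≤ 1/n² and |f(u) − f(s)| > 1/√n. Then the set {f ∈ C([0,θ], ℝ) : f(0) = 0} \ F_N is totally bounded in the supremum metric on C([0,θ], ℝ). -/
/-!
Outside `F_N` a function oscillates by at most `1/√n` on every interval of length `1/n²`,
`n ≥ N`. Since `1/√n → 0`, this is a common modulus of continuity, so the family is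
equicontinuous; chaining `⌈θ n²⌉` steps of length `1/n²` from `f 0 = 0` bounds it uniformly,
and Arzelà–Ascoli gives total boundedness.
-/

open Filter Topology Set Metric

theorem dist_le_mul_of_forall_dist_le {E β : Type*} [NormedAddCommGroup E] [NormedSpace ℝ E]
    [PseudoMetricSpace β] {g : E → β} {δ ε : ℝ}
    (hg : ∀ u v, dist u v ≤ δ → dist (g u) (g v) ≤ ε) {k : ℕ} {x y : E}
    (hxy : dist x y ≤ k * δ) : dist (g x) (g y) ≤ k * ε := by
  rcases k.eq_zero_or_pos with rfl | hk
  · obtain rfl : x = y := dist_le_zero.mp (by simpa using hxy)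
    simp
  set p : ℕ → E := fun i ↦ AffineMap.lineMap x y ((i : ℝ) / k)
  have hstep : ∀ i, dist (p i) (p (i + 1)) ≤ δ := fun i ↦ by
    have hk' : (0 : ℝ) < k := by exact_mod_cast hk
    calc dist (p i) (p (i + 1)) = dist x y / k := by
          simp only [p, dist_lineMap_lineMap, Real.dist_eq]
          rw [Nat.cast_succ, add_div, sub_add_cancel_left, abs_neg, abs_of_pos (by positivity)]
          ring
      _ ≤ δ := by rwa [div_le_iff₀' hk']
  calc dist (g x) (g y) = dist (g (p 0)) (g (p k)) := by simp [p, hk.ne']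
    _ ≤ ∑ i ∈ Finset.range k, dist (g (p i)) (g (p (i + 1))) := dist_le_range_sum_dist (g ∘ p) k
    _ ≤ (Finset.range k).card • ε := Finset.sum_le_card_nsmul _ _ _ fun i _ ↦ hg _ _ (hstep i)
    _ = k * ε := by simp

theorem dist_le_mul_of_forall_dist_le_Icc {β : Type*} [PseudoMetricSpace β] {a b δ ε : ℝ}
    (hab : a ≤ b) {f : Icc a b → β} (hf : ∀ u v, dist u v ≤ δ → dist (f u) (f v) ≤ ε) {k : ℕ}
    (hk : b - a ≤ k * δ) (x y : Icc a b) : dist (f x) (f y) ≤ k * ε := by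
  have hg : ∀ u v, dist u v ≤ δ → dist (IccExtend hab f u) (IccExtend hab f v) ≤ ε :=
    fun u v huv ↦ hf _ _ <| (abs_projIcc_sub_projIcc hab).trans huv
  simpa only [IccExtend_val] using
    dist_le_mul_of_forall_dist_le hg ((Real.dist_le_of_mem_Icc x.2 y.2).trans hk)

theorem uniformEquicontinuous_of_eventually_forall_dist_le {ι X β : Type*} [PseudoMetricSpace X]
    [PseudoMetricSpace β] {F : ι → X → β} {δ ε : ℕ → ℝ} (hδ : ∀ᶠ n in atTop, 0 < δ n)
    (hε : Tendsto ε atTop (𝓝 0))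
    (hF : ∀ᶠ n in atTop, ∀ i u v, dist u v ≤ δ n → dist (F i u) (F i v) ≤ ε n) :
    UniformEquicontinuous F := by
  refine Metric.uniformEquicontinuous_iff.mpr fun η hη ↦ ?_
  obtain ⟨n, hδn, hn, hεn⟩ := (hδ.and (hF.and (hε.eventually (gt_mem_nhds hη)))).exists
  exact ⟨δ n, hδn, fun u v huv i ↦ (hn i u v huv.le).trans_lt hεn⟩

theorem ContinuousMap.totallyBounded_of_equicontinuous {X β : Type*} [TopologicalSpace X]
    [CompactSpace X] [PseudoMetricSpace β] [T2Space β] {S : Set C(X, β)} {K : Set β}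
    (hK : IsCompact K) (hSK : ∀ f ∈ S, ∀ x, f x ∈ K)
    (hS : Equicontinuous ((↑) : S → X → β)) : TotallyBounded S := by
  let e := equivBoundedOfCompact X β
  rw [← totallyBounded_image_iff (isUniformInducing_equivBoundedOfCompact X β)]
  refine (BoundedContinuousFunction.arzela_ascoli K hK (e '' S) ?_ ?_).totallyBounded.subset
    subset_closure
  · rintro _ x ⟨f, hf, rfl⟩
    exact hSK f hf x
  · rintro x₀ U hU
    filter_upwards [hS x₀ U hU] with x hx
    rintro ⟨_, f, hf, rfl⟩
    exact hx ⟨f, hf⟩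

theorem tendsto_one_div_sqrt_atTop_nhds_zero_nat :
    Tendsto (fun n : ℕ ↦ 1 / √(n : ℝ)) atTop (𝓝 0) := by
  simpa only [one_div, Function.comp_def] using
    tendsto_inv_atTop_zero.comp (Real.tendsto_sqrt_atTop.comp tendsto_natCast_atTop_atTop)

theorem ContinuousMap.totallyBounded_of_eventually_forall_dist_le {β : Type*} [MetricSpace β]
    [ProperSpace β] {a b : ℝ} (hab : a ≤ b) {S : Set C(Icc a b, β)} {c : β}
    (hSa : ∀ f ∈ S, f ⟨a, left_mem_Icc.mpr hab⟩ = c) {δ ε : ℕ → ℝ}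
    (hδ : ∀ᶠ n in atTop, 0 < δ n) (hε : Tendsto ε atTop (𝓝 0))
    (hS : ∀ᶠ n in atTop, ∀ f ∈ S, ∀ u v, dist u v ≤ δ n → dist (f u) (f v) ≤ ε n) :
    TotallyBounded S := by
  obtain ⟨n, hδn, hn⟩ := (hδ.and hS).exists
  have hk : b - a ≤ ⌈(b - a) / δ n⌉₊ * δ n := (div_le_iff₀ hδn).mp (Nat.le_ceil _)
  refine totallyBounded_of_equicontinuous (isCompact_closedBall c (⌈(b - a) / δ n⌉₊ * ε n))
    (fun f hf x ↦ ?_) (uniformEquicontinuous_of_eventually_forall_dist_le hδ hε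
      (hS.mono fun n hn (f : S) ↦ hn f f.2)).equicontinuous
  rw [mem_closedBall, ← hSa f hf]
  exact dist_le_mul_of_forall_dist_le_Icc hab (hn f hf) hk x _

theorem complement_of_bad_set_totallyBounded_general
    (θ : ℝ) (hθ : θ ∈ Set.Ioc (0 : ℝ) 1) (N : ℕ) :
    TotallyBounded
      ({f : C(Set.Icc (0 : ℝ) θ, ℝ) | f ⟨0, Set.mem_Icc.mpr ⟨le_refl 0, hθ.1.le⟩⟩ = 0} \
        {f : C(Set.Icc (0 : ℝ) θ, ℝ) | ∃ n : ℕ, N ≤ n ∧ ∃ u s : Set.Icc (0 : ℝ) θ,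
          |(u : ℝ) - (s : ℝ)| ≤ 1 / (n : ℝ) ^ 2 ∧ 1 / Real.sqrt n < |f u - f s|}) :=
  ContinuousMap.totallyBounded_of_eventually_forall_dist_le hθ.1.le (fun _ hf ↦ hf.1)
    (eventually_gt_atTop 0 |>.mono fun _ hn ↦ by positivity)
    tendsto_one_div_sqrt_atTop_nhds_zero_nat
    (eventually_ge_atTop N |>.mono fun n hn _ hf u v huv ↦
      not_lt.mp fun h ↦ hf.2 ⟨n, hn, u, v, huv, h⟩)

/-- Lemma 14: the set of continuous functions on `[0, θ]` started at `0` which do not have,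
for any `n ≥ N`, an oscillation of size more than `1/√n` over some interval of length
`1/n²`, is totally bounded in the supremum metric. -/
theorem complement_of_bad_set_totallyBounded
    (θ : ℝ) (hθ : θ ∈ Set.Ioc (0 : ℝ) 1) (N : ℕ) (hN : 1 ≤ N) :
    TotallyBounded
      ({f : C(Set.Icc (0 : ℝ) θ, ℝ) | f ⟨0, Set.mem_Icc.mpr ⟨le_refl 0, hθ.1.le⟩⟩ = 0} \
        {f : C(Set.Icc (0 : ℝ) θ, ℝ) | ∃ n : ℕ, N ≤ n ∧ ∃ u s : Set.Icc (0 : ℝ) θ,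
          |(u : ℝ) - (s : ℝ)| ≤ 1 / (n : ℝ) ^ 2 ∧ 1 / Real.sqrt n < |f u - f s|}) :=
  complement_of_bad_set_totallyBounded_general θ hθ N
end

section
/- Let c ≥ 0 and let (f_n) be a sequence in C([0,1], ℝ) converging uniformly to f, such that for each n there exists g_n ∈ L²[0,1] with f_n(s) = ∫₀^s g_n(u) du for all s ∈ [0,1] and ∫₀¹ g_n(u)² du ≤ 2c. Then there exists g ∈ L²[0,1] with f(s) = ∫₀^s g(u) du for all s ∈ [0,1] and ∫₀¹ g(u)² du ≤ 2c. -/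
/-!
The derivatives `g n` are bounded in `L²(0,1)` by `√(2c)`, so by Banach–Alaoglu and the Riesz
representation they converge weakly along an ultrafilter finer than `atTop` to some `G` with
`‖G‖ ≤ √(2c)`. Pairing with the indicator of `(0, s]` turns `F n s = ∫₀ˢ g n` into `∫₀ˢ G`, which
must then be the uniform limit `f s`.

The hypotheses only make `(g n)²` integrable, not `g n` measurable, so `g n` is first replaced by
a measurable representative of the same primitive and no larger energy.
-/

open MeasureTheory Set Filter Topology InnerProductSpace

section Primitive

variable {a b : ℝ} {g φ : ℝ → ℝ}

lemma integrableOn_of_integrableOn_sq {α : Type*} [MeasurableSpace α] {μ : Measure α} {s : Set α}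
    {f : α → ℝ} (hs : μ s ≠ ⊤) (hf : AEStronglyMeasurable f (μ.restrict s))
    (hf2 : IntegrableOn (fun x => f x ^ 2) s μ) : IntegrableOn f s μ :=
  have : IsFiniteMeasure (μ.restrict s) := isFiniteMeasure_restrict.2 hs
  ((memLp_two_iff_integrable_sq hf).2 hf2).integrable one_le_two

lemma aestronglyMeasurable_restrict_Ioo_of_forall_lt {E : Type*} [TopologicalSpace E]
    [TopologicalSpace.PseudoMetrizableSpace E] {μ : Measure ℝ} {f : ℝ → E} {T : ℝ}
    (hf : ∀ s < T, AEStronglyMeasurable f (μ.restrict (Ioc a s))) :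
    AEStronglyMeasurable f (μ.restrict (Ioo a T)) := by
  have hIoo : Ioo a T = ⋃ q : {q : ℚ // (q : ℝ) < T}, Ioc a (q : ℝ) := by
    ext x
    simp only [mem_Ioo, mem_iUnion, mem_Ioc, Subtype.exists, exists_prop]
    constructor
    · rintro ⟨hax, hxT⟩
      obtain ⟨q, hxq, hqT⟩ := exists_rat_btwn hxT
      exact ⟨q, hqT, hax, hxq.le⟩
    · rintro ⟨q, hqT, hax, hxq⟩
      exact ⟨hax, hxq.trans_lt hqT⟩
  rw [hIoo, aestronglyMeasurable_iUnion_iff]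
  exact fun q => hf q q.2

lemma integrableOn_Ioc_sSup {S : Set ℝ} (hS : S.Nonempty) (hg : ∀ s ∈ S, IntegrableOn g (Ioc a s))
    (hg2 : IntegrableOn (fun u => g u ^ 2) (Ioc a (sSup S))) :
    IntegrableOn g (Ioc a (sSup S)) := by
  refine integrableOn_of_integrableOn_sq measure_Ioc_lt_top.ne ?_ hg2
  rw [← Measure.restrict_congr_set Ioo_ae_eq_Ioc]
  refine aestronglyMeasurable_restrict_Ioo_of_forall_lt fun s hs => ?_
  obtain ⟨t, htS, hst⟩ := exists_lt_of_lt_csSup hS hs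
  exact ((hg t htS).mono_set (Ioc_subset_Ioc_right hst.le)).aestronglyMeasurable

/-- `∫ u in a..s, g u` is `0` as soon as `g` is not integrable on `(a, s]`, so `g` is cut off at
the supremum `T` of the points up to which it is integrable; continuity of `φ` then forces
`φ = 0` on `[T, b]` when `T < b`. -/
theorem exists_memLp_eq_intervalIntegral_of_integrableOn_sq (hab : a ≤ b)
    (hφ : ContinuousOn φ (Icc a b)) (hg2 : IntegrableOn (fun u => g u ^ 2) (Icc a b))
    (hrep : ∀ s ∈ Icc a b, φ s = ∫ u in a..s, g u) :
    ∃ h : ℝ → ℝ, MemLp h 2 (volume.restrict (Ioc a b)) ∧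
      (∫ u in a..b, h u ^ 2) ≤ (∫ u in a..b, g u ^ 2) ∧
      ∀ s ∈ Icc a b, φ s = ∫ u in a..s, h u := by
  set S := {s ∈ Icc a b | IntegrableOn g (Ioc a s)}
  have haS : a ∈ S := ⟨left_mem_Icc.2 hab, by simp⟩
  have hSb : BddAbove S := ⟨b, fun s hs => hs.1.2⟩
  set T := sSup S
  have haT : a ≤ T := le_csSup hSb haS
  have hTb : T ≤ b := csSup_le ⟨a, haS⟩ fun s hs => hs.1.2
  have hgT : IntegrableOn g (Ioc a T) :=
    integrableOn_Ioc_sSup ⟨a, haS⟩ (fun s hs => hs.2)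
      (hg2.mono_set (Ioc_subset_Icc_self.trans (Icc_subset_Icc_right hTb)))
  have hφ_zero (hT_lt : T < b) : ∀ s ∈ Icc T b, φ s = 0 := by
    refine EqOn.of_subset_closure (f := φ) (g := 0) (s := Ioc T b) (fun s hs => ?_)
      (hφ.mono (Icc_subset_Icc_left haT)) continuousOn_const Ioc_subset_Icc_self
      (closure_Ioc hT_lt.ne).symm.subset
    have hs' : s ∈ Icc a b := ⟨haT.trans hs.1.le, hs.2⟩
    rw [Pi.zero_apply, hrep s hs', intervalIntegral.integral_undef]
    rw [intervalIntegrable_iff_integrableOn_Ioc_of_le hs'.1]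
    exact fun hgs => (le_csSup hSb ⟨hs', hgs⟩).not_gt hs.1
  set h := (Ioc a T).indicator g
  have hsq : ∀ u, h u ^ 2 ≤ g u ^ 2 := by
    intro u
    by_cases hu : u ∈ Ioc a T
    · simp [h, hu]
    · simp [h, hu, sq_nonneg]
  have hmeas : AEStronglyMeasurable h (volume.restrict (Ioc a b)) :=
    (hgT.integrable_indicator measurableSet_Ioc).aestronglyMeasurable.restrict
  have hh2 : IntegrableOn (fun u => h u ^ 2) (Ioc a b) :=
    (hg2.mono_set Ioc_subset_Icc_self).mono' (hmeas.pow 2) (Eventually.of_forall fun u => by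
      simpa only [Real.norm_eq_abs, abs_pow, sq_abs] using hsq u)
  refine ⟨h, (memLp_two_iff_integrable_sq hmeas).2 hh2, ?_, fun s hs => ?_⟩
  · exact intervalIntegral.integral_mono_on hab
      ((intervalIntegrable_iff_integrableOn_Ioc_of_le hab).2 hh2)
      ((intervalIntegrable_iff_integrableOn_Icc_of_le hab).2 hg2) fun u _ => hsq u
  · have hrep_min : (∫ u in a..s, h u) = φ (min s T) := by
      rw [intervalIntegral.integral_of_le hs.1, setIntegral_indicator measurableSet_Ioc,
        Ioc_inter_Ioc, max_self, hrep _ ⟨le_min hs.1 haT, (min_le_left _ _).trans hs.2⟩,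
        intervalIntegral.integral_of_le (le_min hs.1 haT)]
    rw [hrep_min]
    rcases le_or_gt s T with hsT | hTs
    · rw [min_eq_left hsT]
    · rw [min_eq_right hTs.le, hφ_zero (hTs.trans_le hs.2) s ⟨hTs.le, hs.2⟩,
        hφ_zero (hTs.trans_le hs.2) T ⟨le_rfl, hTb⟩]

end Primitive

theorem exists_tendsto_inner_of_norm_le {E ι : Type*} [NormedAddCommGroup E] [InnerProductSpace ℝ E]
    [CompleteSpace E] (U : Ultrafilter ι) {x : ι → E} {R : ℝ} (hx : ∀ i, ‖x i‖ ≤ R) :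
    ∃ z : E, ‖z‖ ≤ R ∧ ∀ y, Tendsto (fun i => ⟪x i, y⟫_ℝ) U (𝓝 ⟪z, y⟫_ℝ) := by
  set K := WeakDual.toStrongDual ⁻¹' Metric.closedBall (0 : StrongDual ℝ E) R
  set D : ι → WeakDual ℝ E := fun i => StrongDual.toWeakDual (toDual ℝ E (x i))
  have hDK : ∀ i, D i ∈ K := fun i => by
    simpa [K, D, dist_zero_right] using hx i
  obtain ⟨Λ, hΛK, hΛ⟩ := (WeakDual.isCompact_closedBall 0 R).ultrafilter_le_nhds (U.map D)
    (tendsto_principal.2 (Eventually.of_forall hDK))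
  refine ⟨(toDual ℝ E).symm (WeakDual.toStrongDual Λ), ?_, fun y => ?_⟩
  · simpa [K, dist_zero_right] using hΛK
  · rw [toDual_symm_apply]
    exact tendsto_iff_forall_eval_tendsto_topDualPairing.1 hΛ y

section IntervalL2

variable {a b : ℝ}

lemma inner_toLp_indicatorConstLp_Ioc {f : ℝ → ℝ} (hf : MemLp f 2 (volume.restrict (Ioc a b)))
    {s : ℝ} (hs : s ∈ Icc a b) :
    ⟪hf.toLp f, indicatorConstLp 2 measurableSet_Ioc (measure_ne_top _ (Ioc a s)) (1 : ℝ)⟫_ℝ =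
      ∫ u in a..s, f u := by
  rw [real_inner_comm, L2.inner_indicatorConstLp_one, Measure.restrict_restrict measurableSet_Ioc,
    inter_eq_self_of_subset_left (Ioc_subset_Ioc_right hs.2), intervalIntegral.integral_of_le hs.1]
  exact integral_congr_ae (ae_restrict_of_ae_restrict_of_subset (Ioc_subset_Ioc_right hs.2)
    hf.coeFn_toLp)

lemma norm_toLp_sq_Ioc {f : ℝ → ℝ} (hab : a ≤ b) (hf : MemLp f 2 (volume.restrict (Ioc a b))) :
    ‖hf.toLp f‖ ^ 2 = ∫ u in a..b, f u ^ 2 := by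
  rw [← real_inner_self_eq_norm_sq, L2.inner_def, intervalIntegral.integral_of_le hab]
  refine integral_congr_ae (hf.coeFn_toLp.mono fun u hu => ?_)
  simp [hu, sq]

end IntervalL2

/-- Lower-semicontinuity (closedness of level sets) of the Dirichlet energy, used in the
proof of Proposition 15: a uniform limit of absolutely continuous functions on `[0,1]` with
square-integrable derivatives of energy at most `c` is again absolutely continuous with
energy at most `c`. -/
theorem dirichlet_energy_level_set_closed_under_uniform_limits
    (c : ℝ) (hc : 0 ≤ c) (F : ℕ → ℝ → ℝ) (f : ℝ → ℝ) (g : ℕ → ℝ → ℝ)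
    (hFcont : ∀ n, ContinuousOn (F n) (Set.Icc (0 : ℝ) 1))
    (hconv : TendstoUniformlyOn F f Filter.atTop (Set.Icc (0 : ℝ) 1))
    (hgL2 : ∀ n, IntegrableOn (fun u => g n u ^ 2) (Set.Icc (0 : ℝ) 1))
    (hrep : ∀ n, ∀ s ∈ Set.Icc (0 : ℝ) 1, F n s = ∫ u in (0 : ℝ)..s, g n u)
    (henergy : ∀ n, (∫ u in (0 : ℝ)..1, g n u ^ 2) ≤ 2 * c) :
    ∃ G : ℝ → ℝ, IntegrableOn (fun u => G u ^ 2) (Set.Icc (0 : ℝ) 1) ∧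
      (∀ s ∈ Set.Icc (0 : ℝ) 1, f s = ∫ u in (0 : ℝ)..s, G u) ∧
      (∫ u in (0 : ℝ)..1, G u ^ 2) ≤ 2 * c := by
  have h01 : (0 : ℝ) ≤ 1 := zero_le_one
  have h2c : 0 ≤ 2 * c := by positivity
  choose h hh hh_energy hh_rep using fun n =>
    exists_memLp_eq_intervalIntegral_of_integrableOn_sq h01 (hFcont n) (hgL2 n) (hrep n)
  have hnorm (n : ℕ) : ‖(hh n).toLp (h n)‖ ≤ √(2 * c) := by
    rw [Real.le_sqrt (norm_nonneg _) h2c, norm_toLp_sq_Ioc h01]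
    exact (hh_energy n).trans (henergy n)
  obtain ⟨z, hz_norm, hz⟩ := exists_tendsto_inner_of_norm_le (Ultrafilter.of atTop) hnorm
  have hz_toLp : (Lp.memLp z).toLp z = z := Lp.toLp_coeFn z (Lp.memLp z)
  refine ⟨z, ?_, fun s hs => ?_, ?_⟩
  · exact (integrableOn_Icc_iff_integrableOn_Ioc (by simp)).2
      ((memLp_two_iff_integrable_sq (Lp.aestronglyMeasurable z)).1 (Lp.memLp z))
  · have hlim := hz (indicatorConstLp 2 measurableSet_Ioc (measure_ne_top _ (Ioc 0 s)) 1)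
    rw [← hz_toLp, inner_toLp_indicatorConstLp_Ioc _ hs] at hlim
    simp_rw [inner_toLp_indicatorConstLp_Ioc _ hs, ← hh_rep _ s hs] at hlim
    exact tendsto_nhds_unique ((hconv.tendsto_at hs).mono_left (Ultrafilter.of_le _)) hlim
  · rw [← norm_toLp_sq_Ioc h01 (Lp.memLp z), hz_toLp]
    exact (Real.le_sqrt (norm_nonneg _) h2c).1 hz_norm
end

section
/- On the probability space [0,1] with the Borel σ-algebra and Lebesgue measure P, define for T ≥ 0 and ω ∈ [0,1]: X_T(ω) = e^{2T} if there exists n ∈ ℕ with T − n ∈ [ω − e^{−4T}, ω + e^{−4T}), and X_T(ω) = e^{T} otherwise. Then for every ω ∈ [0,1], limsup_{T→∞} (1/T)·log X_T(ω) = 2. -/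
open Filter

/-- The process of the appendix counterexample: `X T ω = e^{2T}` if `T − n` lies in the
window `[ω − e^{−4T}, ω + e^{−4T})` for some `n ∈ ℕ`, and `X T ω = e^{T}` otherwise. -/
noncomputable def appendixX (T ω : ℝ) : ℝ :=
  open scoped Classical in
  if ∃ n : ℕ, T - n ∈ Set.Ico (ω - Real.exp (-4 * T)) (ω + Real.exp (-4 * T)) then
    Real.exp (2 * T)
  else Real.exp T

/-! At the times `T = n + ω` the point `ω` sits at the left end of its own window, so
`X_T(ω) = e^{2T}` there; at all other times `X_T(ω) ≤ e^{2T}` anyway. -/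

lemma Filter.limsup_eq_of_eventually_le_of_frequently_eq {ι α : Type*}
    [ConditionallyCompleteLinearOrder α] {f : Filter ι} {u : ι → α} {a : α}
    (hle : ∀ᶠ i in f, u i ≤ a) (hfreq : ∃ᶠ i in f, u i = a) : limsup u f = a := by
  have hge : ∃ᶠ i in f, a ≤ u i := hfreq.mono fun _ h => h.ge
  exact le_antisymm (limsup_le_of_le (IsCoboundedUnder.of_frequently_ge hge) hle)
    (le_limsup_of_frequently_le hge ⟨a, hle⟩)

lemma log_appendixX_le {T : ℝ} (hT : 0 ≤ T) (ω : ℝ) : Real.log (appendixX T ω) ≤ 2 * T := by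
  unfold appendixX
  split_ifs <;> simp only [Real.log_exp] <;> linarith

lemma appendixX_nat_add_self (n : ℕ) (ω : ℝ) :
    appendixX (n + ω) ω = Real.exp (2 * (n + ω)) := by
  refine if_pos ⟨n, ?_, ?_⟩ <;> linarith [Real.exp_pos (-4 * (n + ω))]

lemma growthRate_appendixX_le {T : ℝ} (hT : 0 < T) (ω : ℝ) :
    1 / T * Real.log (appendixX T ω) ≤ 2 := by
  rw [div_mul_eq_mul_div, one_mul, div_le_iff₀ hT]
  exact log_appendixX_le hT.le ω

lemma growthRate_appendixX_nat_add_self {n : ℕ} {ω : ℝ} (h : 0 < n + ω) :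
    1 / (n + ω) * Real.log (appendixX (n + ω) ω) = 2 := by
  rw [appendixX_nat_add_self, Real.log_exp]
  field_simp

/-- First claim of the appendix counterexample: for every `ω ∈ [0,1]`, the pointwise
exponential growth rate `limsup_{T→∞} (1/T) log X_T(ω)` equals `2`. -/
theorem appendixX_pointwise_limsup_eq_two :
    ∀ ω ∈ Set.Icc (0 : ℝ) 1,
      Filter.limsup (fun T : ℝ => (1 / T) * Real.log (appendixX T ω)) Filter.atTop = 2 := by
  intro ω _
  refine limsup_eq_of_eventually_le_of_frequently_eq
    ((eventually_gt_atTop 0).mono fun T hT => growthRate_appendixX_le hT ω) ?_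
  have hshift : Tendsto (fun n : ℕ => (n : ℝ) + ω) atTop atTop :=
    tendsto_atTop_add_const_right _ ω tendsto_natCast_atTop_atTop
  exact hshift.frequently ((hshift.eventually (eventually_gt_atTop 0)).mono
    fun n hn => growthRate_appendixX_nat_add_self hn).frequently
end

section
/- On the probability space [0,1] with the Borel σ-algebra and Lebesgue measure P, define for T ≥ 0 and ω ∈ [0,1]: X_T(ω) = e^{2T} if there exists n ∈ ℕ with T − n ∈ [ω − e^{−4T}, ω + e^{−4T}), and X_T(ω) = e^{T} otherwise. Then lim_{T→∞} (1/T)·log E[X_T] = 1, where E denotes expectation (integration over ω ∈ [0,1] with respect to Lebesgue measure). -/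
/-!
`X_T` equals `e^T` off the set of `ω` lying within `e^{-4T}` of some `T - n`. Inside `[0,1]`
only three values of `n` are relevant, so that set has measure at most `6 e^{-4T}`, and
`e^T ≤ E[X_T] ≤ e^T + 6 e^{-2T} ≤ 7 e^T`. Hence `log E[X_T] = T + O(1)`.
-/

open Filter MeasureTheory

open Set

theorem tendsto_inv_mul_log_of_exp_le_of_le_mul_exp {f : ℝ → ℝ} {a C : ℝ}
    (hlow : ∀ᶠ T in atTop, Real.exp (a * T) ≤ f T)
    (hup : ∀ᶠ T in atTop, f T ≤ C * Real.exp (a * T)) :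
    Tendsto (fun T => (1 / T) * Real.log (f T)) atTop (nhds a) := by
  have hlim : Tendsto (fun T => a + Real.log C / T) atTop (nhds a) := by
    simpa using
      tendsto_const_nhds.add ((tendsto_const_nhds (x := Real.log C)).div_atTop tendsto_id)
  refine tendsto_of_tendsto_of_tendsto_of_le_of_le' tendsto_const_nhds hlim ?_ ?_
  · filter_upwards [hlow, eventually_gt_atTop 0] with T hf hT
    have hlog : a * T ≤ Real.log (f T) :=
      (Real.le_log_iff_exp_le ((Real.exp_pos _).trans_le hf)).2 hf
    rwa [one_div_mul_eq_div, le_div_iff₀ hT]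
  · filter_upwards [hlow, hup, eventually_gt_atTop 0] with T hf hf' hT
    have hfpos : 0 < f T := (Real.exp_pos _).trans_le hf
    have hC : 0 < C := pos_of_mul_pos_left (hfpos.trans_le hf') (Real.exp_pos _).le
    have hlog : Real.log (f T) ≤ Real.log C + a * T := by
      rwa [Real.log_le_iff_le_exp hfpos, Real.exp_add, Real.exp_log hC]
    rw [one_div_mul_eq_div, div_le_iff₀ hT, add_mul, div_mul_cancel₀ _ hT.ne']
    linarith

namespace AppendixX

def hitSet (T r : ℝ) : Set ℝ := {ω | ∃ n : ℕ, T - n ∈ Ico (ω - r) (ω + r)}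

theorem hitSet_eq_iUnion (T r : ℝ) :
    hitSet T r = ⋃ n : ℕ, Ioc (T - n - r) (T - n + r) := by
  ext ω
  simp only [hitSet, mem_ofPred_eq, mem_Ico, mem_iUnion, mem_Ioc]
  refine exists_congr fun n => ⟨fun h => ⟨?_, ?_⟩, fun h => ⟨?_, ?_⟩⟩ <;>
    linarith [h.1, h.2]

theorem measurableSet_hitSet (T r : ℝ) : MeasurableSet (hitSet T r) := by
  rw [hitSet_eq_iUnion]
  exact .iUnion fun _ => measurableSet_Ioc

theorem hitSet_inter_Icc_subset {T r : ℝ} (hr : r ≤ 1) :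
    hitSet T r ∩ Icc 0 1 ⊆
      ⋃ n ∈ Finset.Icc (⌊T + r⌋₊ - 2) ⌊T + r⌋₊, Ioc (T - n - r) (T - n + r) := by
  rw [hitSet_eq_iUnion]
  rintro ω ⟨hω, hω0, hω1⟩
  obtain ⟨n, hn⟩ := mem_iUnion.1 hω
  have hle : n ≤ ⌊T + r⌋₊ := Nat.le_floor (by linarith [hn.2])
  have hlt : ⌊T + r⌋₊ < n + 3 := (Nat.floor_lt' (by omega)).2 (by push_cast; linarith [hn.1])
  exact mem_biUnion (Finset.mem_Icc.2 ⟨by omega, hle⟩) hn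

theorem measureReal_hitSet_inter_Icc_le {T r : ℝ} (hr0 : 0 ≤ r) (hr : r ≤ 1) :
    volume.real (hitSet T r ∩ Icc 0 1) ≤ 6 * r := by
  set N := ⌊T + r⌋₊
  calc volume.real (hitSet T r ∩ Icc 0 1)
      ≤ volume.real (⋃ n ∈ Finset.Icc (N - 2) N, Ioc (T - n - r) (T - n + r)) :=
        measureReal_mono (hitSet_inter_Icc_subset hr)
          (measure_biUnion_lt_top (Finset.finite_toSet _) fun _ _ => measure_Ioc_lt_top).ne
    _ ≤ ∑ n ∈ Finset.Icc (N - 2) N, volume.real (Ioc (T - n - r) (T - n + r)) :=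
        measureReal_biUnion_finset_le _ _
    _ = ∑ n ∈ Finset.Icc (N - 2) N, 2 * r :=
        Finset.sum_congr rfl fun n _ => by rw [Real.volume_real_Ioc_of_le (by linarith)]; ring
    _ = (Finset.Icc (N - 2) N).card * (2 * r) := by rw [Finset.sum_const, nsmul_eq_mul]
    _ ≤ 3 * (2 * r) := by
        gcongr
        exact_mod_cast (Nat.card_Icc _ _).trans_le (by omega)
    _ = 6 * r := by ring

theorem appendixX_eq_add_indicator (T : ℝ) :
    appendixX T = fun ω => Real.exp T +
      (hitSet T (Real.exp (-4 * T))).indicator (fun _ => Real.exp (2 * T) - Real.exp T) ω := by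
  funext ω
  rw [appendixX]
  split_ifs with h
  · rw [indicator_of_mem (s := hitSet _ _) h]
    ring
  · rw [indicator_of_notMem (s := hitSet _ _) h, add_zero]

theorem integral_appendixX (T : ℝ) :
    ∫ ω in Icc (0 : ℝ) 1, appendixX T ω =
      Real.exp T + volume.real (hitSet T (Real.exp (-4 * T)) ∩ Icc 0 1) *
        (Real.exp (2 * T) - Real.exp T) := by
  have hS := measurableSet_hitSet T (Real.exp (-4 * T))
  rw [appendixX_eq_add_indicator,
    integral_add (integrable_const _) ((integrable_const _).indicator hS), integral_const,
    integral_indicator_const _ hS, measureReal_restrict_apply_univ,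
    measureReal_restrict_apply hS, Real.volume_real_Icc_of_le zero_le_one]
  simp

theorem exp_le_integral_appendixX {T : ℝ} (hT : 0 ≤ T) :
    Real.exp T ≤ ∫ ω in Icc (0 : ℝ) 1, appendixX T ω := by
  rw [integral_appendixX]
  have hexp : Real.exp T ≤ Real.exp (2 * T) := Real.exp_le_exp.2 (by linarith)
  exact le_add_of_nonneg_right (mul_nonneg measureReal_nonneg (sub_nonneg.2 hexp))

theorem integral_appendixX_le {T : ℝ} (hT : 0 ≤ T) :
    ∫ ω in Icc (0 : ℝ) 1, appendixX T ω ≤ 7 * Real.exp T := by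
  have hr : Real.exp (-4 * T) ≤ 1 := Real.exp_le_one_iff.2 (by linarith)
  have hμ := measureReal_hitSet_inter_Icc_le (T := T) (Real.exp_pos _).le hr
  rw [integral_appendixX]
  calc Real.exp T + volume.real (hitSet T (Real.exp (-4 * T)) ∩ Icc 0 1) *
          (Real.exp (2 * T) - Real.exp T)
      ≤ Real.exp T + 6 * Real.exp (-4 * T) * Real.exp (2 * T) := by
        gcongr
        · exact sub_nonneg.2 (Real.exp_le_exp.2 (by linarith))
        · exact sub_le_self _ (Real.exp_pos T).le
    _ = Real.exp T + 6 * Real.exp (-(2 * T)) := by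
        rw [mul_assoc, ← Real.exp_add]
        ring_nf
    _ ≤ 7 * Real.exp T := by
        have : Real.exp (-(2 * T)) ≤ Real.exp T := Real.exp_le_exp.2 (by linarith)
        linarith

end AppendixX

/-- Second claim of the appendix counterexample: the expected exponential growth rate
`lim_{T→∞} (1/T) log E[X_T]` equals `1` (expectation over `ω ∈ [0,1]` with Lebesgue
measure), strictly smaller than the pointwise limsup rate `2`. -/
theorem appendixX_expectation_growth_rate_eq_one :
    Filter.Tendsto
      (fun T : ℝ => (1 / T) * Real.log (∫ ω in Set.Icc (0 : ℝ) 1, appendixX T ω))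
      Filter.atTop (nhds 1) := by
  refine tendsto_inv_mul_log_of_exp_le_of_le_mul_exp (C := 7) ?_ ?_ <;>
    filter_upwards [eventually_ge_atTop 0] with T hT <;>
    rw [one_mul]
  exacts [AppendixX.exp_le_integral_appendixX hT, AppendixX.integral_appendixX_le hT]
end

section
/- Let r > 0, m > 0, θ ∈ (0,1], and let f : [0,1] → ℝ be twice continuously differentiable with f(0) = 0 and rmφ − (1/2)∫₀^φ f'(s)² ds > 0 for all φ ∈ (0,θ]. Then for every ε > 0 and δ > 0 there exists a twice continuously differentiable g : [0,1] → ℝ with g(0) = 0, g'(0) = 0, sup_{s∈[0,θ]} |f(s) − g(s)| ≤ ε/2, rmφ − (1/2)∫₀^φ g'(s)² ds > 0 for all φ ∈ (0,θ], and rmθ − (1/2)∫₀^θ g'(s)² ds > rmθ − (1/2)∫₀^θ f'(s)² ds − δ/2. -/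
/-!
Reparametrize time: `g = f ∘ ρ` with `ρ s = s - η * arctan (s / η)`. As `ρ 0 = 0 = ρ' 0`, the
path `g` starts flat. As `0 ≤ ρ' ≤ 1`, `g'² = f'(ρ)² ρ'² ≤ f'(ρ)² ρ'`, whose integral over
`[0, φ]` is `∫₀^{ρ φ} f'² ≤ ∫₀^φ f'²`; so the energy never increases and the growth functional
never decreases. Finally `0 ≤ s - ρ s ≤ η π / 2`, so `g` is uniformly close to `f` for small `η`.
-/

open Real Set

noncomputable def flatStart (η s : ℝ) : ℝ := s - η * arctan (s / η)

section FlatStart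

variable {η : ℝ}

@[simp]
theorem flatStart_zero : flatStart η 0 = 0 := by simp [flatStart]

theorem hasDerivAt_flatStart (hη : η ≠ 0) (s : ℝ) :
    HasDerivAt (flatStart η) (s ^ 2 / (s ^ 2 + η ^ 2)) s := by
  have h : HasDerivAt (fun x => x - η * arctan (x / η))
      (1 - η * (1 / (1 + (s / η) ^ 2) * (1 / η))) s :=
    (hasDerivAt_id' s).sub (((hasDerivAt_id' s).div_const η).arctan.const_mul η)
  refine h.congr_deriv ?_
  field_simp
  ring

theorem contDiff_flatStart {n : WithTop ℕ∞} : ContDiff ℝ n (flatStart η) :=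
  contDiff_id.sub (contDiff_const.mul (contDiff_arctan.comp (contDiff_id.div_const η)))

theorem monotone_flatStart (hη : η ≠ 0) : Monotone (flatStart η) :=
  monotone_of_deriv_nonneg (fun s => (hasDerivAt_flatStart hη s).differentiableAt)
    fun s => (hasDerivAt_flatStart hη s).deriv ▸ by positivity

theorem flatStart_nonneg (hη : η ≠ 0) {s : ℝ} (hs : 0 ≤ s) : 0 ≤ flatStart η s :=
  flatStart_zero (η := η) ▸ monotone_flatStart hη hs

theorem flatStart_le_self (hη : 0 ≤ η) {s : ℝ} (hs : 0 ≤ s) : flatStart η s ≤ s := by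
  have : 0 ≤ arctan (s / η) := arctan_nonneg.2 (by positivity)
  unfold flatStart
  nlinarith

theorem sub_flatStart_le (hη : 0 ≤ η) (s : ℝ) : s - flatStart η s ≤ 2 * η := by
  have : arctan (s / η) ≤ 2 := (arctan_lt_pi_div_two _).le.trans (by linarith [pi_le_four])
  unfold flatStart
  nlinarith

end FlatStart

theorem integral_sq_deriv_comp_le {f ρ ρ' : ℝ → ℝ} {a b : ℝ} (hab : a ≤ b) (hf : ContDiff ℝ 1 f)
    (hρ : ∀ s, HasDerivAt ρ (ρ' s) s) (hρ' : Continuous ρ') (hρ'_nonneg : ∀ s, 0 ≤ ρ' s)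
    (hρ'_le_one : ∀ s, ρ' s ≤ 1) :
    ∫ s in a..b, deriv (f ∘ ρ) s ^ 2 ≤ ∫ u in ρ a..ρ b, deriv f u ^ 2 := by
  have hf' : Continuous (deriv f) := hf.continuous_deriv le_rfl
  have hchain : deriv (f ∘ ρ) = fun s => deriv f (ρ s) * ρ' s :=
    funext fun s => ((hf.differentiable one_ne_zero _).hasDerivAt.comp s (hρ s)).deriv
  have hρc : Continuous ρ := continuous_iff_continuousAt.2 fun s => (hρ s).continuousAt
  rw [hchain, ← intervalIntegral.integral_comp_mul_deriv (g := fun u => deriv f u ^ 2)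
    (fun s _ => hρ s) hρ'.continuousOn (hf'.pow 2)]
  refine intervalIntegral.integral_mono_on hab
    ((((hf'.comp hρc).mul hρ').pow 2).intervalIntegrable _ _)
    ((((hf'.comp hρc).pow 2).mul hρ').intervalIntegrable _ _) fun s _ => ?_
  have : ρ' s ^ 2 ≤ ρ' s := by nlinarith [hρ'_nonneg s, hρ'_le_one s]
  calc (deriv f (ρ s) * ρ' s) ^ 2 = deriv f (ρ s) ^ 2 * ρ' s ^ 2 := by ring
    _ ≤ deriv f (ρ s) ^ 2 * ρ' s := by gcongr

section FlatStartComp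

variable {f : ℝ → ℝ} {η : ℝ}

theorem deriv_comp_flatStart_zero (hf : DifferentiableAt ℝ f 0) (hη : η ≠ 0) :
    deriv (f ∘ flatStart η) 0 = 0 := by
  have h := (flatStart_zero (η := η) ▸ hf.hasDerivAt).comp 0 (hasDerivAt_flatStart hη 0)
  simpa using h.deriv

theorem integral_sq_deriv_comp_flatStart_le (hf : ContDiff ℝ 1 f) (hη : 0 < η) {φ : ℝ}
    (hφ : 0 ≤ φ) :
    ∫ s in (0 : ℝ)..φ, deriv (f ∘ flatStart η) s ^ 2 ≤ ∫ s in (0 : ℝ)..φ, deriv f s ^ 2 := by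
  have hcomp := integral_sq_deriv_comp_le hφ hf (hasDerivAt_flatStart hη.ne')
    ((continuous_pow 2).div (by fun_prop) fun s => by positivity) (fun s => by positivity)
    (fun s => div_le_one_of_le₀ (by nlinarith) (by positivity))
  rw [flatStart_zero] at hcomp
  refine hcomp.trans (intervalIntegral.integral_mono_interval le_rfl
    (flatStart_nonneg hη.ne' hφ) (flatStart_le_self hη.le hφ)
    (Filter.Eventually.of_forall fun s => sq_nonneg _)
    (((hf.continuous_deriv le_rfl).pow 2).intervalIntegrable _ _))

theorem abs_sub_comp_flatStart_le (hf : Differentiable ℝ f) {C θ : ℝ}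
    (hC : ∀ x ∈ Icc 0 θ, ‖deriv f x‖ ≤ C) (hη : 0 < η) {s : ℝ} (hs : s ∈ Icc 0 θ) :
    |f s - f (flatStart η s)| ≤ C * (2 * η) := by
  have hρs : flatStart η s ∈ Icc 0 θ :=
    ⟨flatStart_nonneg hη.ne' hs.1, (flatStart_le_self hη.le hs.1).trans hs.2⟩
  have hlip := (convex_Icc 0 θ).norm_image_sub_le_of_norm_deriv_le (fun x _ => hf x) hC hρs hs
  rw [Real.norm_eq_abs, Real.norm_eq_abs,
    abs_of_nonneg (sub_nonneg.2 (flatStart_le_self hη.le hs.1))] at hlip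
  exact hlip.trans <| mul_le_mul_of_nonneg_left (sub_flatStart_le hη.le s)
    ((norm_nonneg _).trans (hC s hs))

end FlatStartComp

theorem flat_start_modification_general
    (r m θ : ℝ) (hθ : θ ∈ Set.Ioc (0 : ℝ) 1)
    (f : ℝ → ℝ) (hf : ContDiff ℝ 2 f) (hf0 : f 0 = 0)
    (hpos : ∀ φ ∈ Set.Ioc (0 : ℝ) θ,
      0 < r * m * φ - (1 / 2) * (∫ s in (0 : ℝ)..φ, (deriv f s) ^ 2))
    (ε δ : ℝ) (hε : 0 < ε) (hδ : 0 < δ) :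
    ∃ g : ℝ → ℝ, ContDiff ℝ 2 g ∧ g 0 = 0 ∧ deriv g 0 = 0 ∧
      (∀ s ∈ Set.Icc (0 : ℝ) θ, |f s - g s| ≤ ε / 2) ∧
      (∀ φ ∈ Set.Ioc (0 : ℝ) θ,
        0 < r * m * φ - (1 / 2) * (∫ s in (0 : ℝ)..φ, (deriv g s) ^ 2)) ∧
      r * m * θ - (1 / 2) * (∫ s in (0 : ℝ)..θ, (deriv g s) ^ 2) >
        r * m * θ - (1 / 2) * (∫ s in (0 : ℝ)..θ, (deriv f s) ^ 2) - δ / 2 := by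
  obtain ⟨C, hC⟩ := isCompact_Icc.exists_bound_of_continuousOn
    (hf.continuous_deriv one_le_two).continuousOn (s := Icc 0 θ)
  have hC0 : 0 ≤ C := (norm_nonneg _).trans (hC 0 ⟨le_rfl, hθ.1.le⟩)
  set η := ε / (4 * (C + 1))
  have hη : 0 < η := by positivity
  have hCη : C * (2 * η) ≤ ε / 2 := by
    rw [show C * (2 * η) = ε / 2 * (C / (C + 1)) by simp only [η]; field_simp; ring]
    exact mul_le_of_le_one_right (by positivity) (div_le_one_of_le₀ (by linarith) (by positivity))
  have henergy := fun φ (hφ : 0 ≤ φ) =>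
    integral_sq_deriv_comp_flatStart_le (hf.of_le one_le_two) hη hφ
  refine ⟨f ∘ flatStart η, hf.comp contDiff_flatStart, by simp [hf0],
    deriv_comp_flatStart_zero (hf.differentiable two_ne_zero 0) hη.ne',
    fun s hs => (abs_sub_comp_flatStart_le (hf.differentiable two_ne_zero) hC hη hs).trans hCη,
    fun φ hφ => ?_, ?_⟩
  · linarith [hpos φ hφ, henergy φ hφ.1.le]
  · linarith [henergy θ hθ.1.le]

/-- The modification step at the end of the proof of Lemma 8: a `C²` path `f` with `f(0) = 0`
and strictly positive growth functional `J(f,φ) = rmφ − (1/2)∫₀^φ f'²` on `(0, θ]` can be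
replaced by a nearby `C²` path `g` with `g(0) = 0`, flat initial derivative, uniformly
`ε/2`-close to `f` on `[0, θ]`, still with strictly positive growth functional on `(0, θ]`,
and with terminal value of the functional reduced by less than `δ/2`. -/
theorem flat_start_modification
    (r m θ : ℝ) (hr : 0 < r) (hm : 0 < m) (hθ : θ ∈ Set.Ioc (0 : ℝ) 1)
    (f : ℝ → ℝ) (hf : ContDiff ℝ 2 f) (hf0 : f 0 = 0)
    (hpos : ∀ φ ∈ Set.Ioc (0 : ℝ) θ,
      0 < r * m * φ - (1 / 2) * (∫ s in (0 : ℝ)..φ, (deriv f s) ^ 2))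
    (ε δ : ℝ) (hε : 0 < ε) (hδ : 0 < δ) :
    ∃ g : ℝ → ℝ, ContDiff ℝ 2 g ∧ g 0 = 0 ∧ deriv g 0 = 0 ∧
      (∀ s ∈ Set.Icc (0 : ℝ) θ, |f s - g s| ≤ ε / 2) ∧
      (∀ φ ∈ Set.Ioc (0 : ℝ) θ,
        0 < r * m * φ - (1 / 2) * (∫ s in (0 : ℝ)..φ, (deriv g s) ^ 2)) ∧
      r * m * θ - (1 / 2) * (∫ s in (0 : ℝ)..θ, (deriv g s) ^ 2) >
        r * m * θ - (1 / 2) * (∫ s in (0 : ℝ)..θ, (deriv f s) ^ 2) - δ / 2 :=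
  flat_start_modification_general r m θ hθ f hf hf0 hpos ε δ hε hδ
end

section
/- There exists a natural number N₀ such that for all natural numbers N ≥ N₀ and all real j ≥ 1: ∑_{n=N}^{∞} (8·√(n³(j+1)) / (j·√π))·exp(−j²n / (16(j+1))) ≤ exp(−jN/64). -/
/-!
For `n ≥ N ≥ 1` and `j ≥ 1` the prefactor is at most `8 n²` (as `j + 1 ≤ π j²`), and the exponent
satisfies `j² n / (16 (j + 1)) ≥ j n / 32 ≥ n / 64 + j N / 64`. Hence the sum is at most
`exp (-j N / 64)` times the tail `∑_{n ≥ N} 8 n² e^{-n/64}` of a convergent series, which is `≤ 1`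
once `N` is large.
-/

open Real Filter Topology

theorem tendsto_tsum_subtype_le_atTop_zero {G : Type*} [AddCommGroup G] [TopologicalSpace G]
    [IsTopologicalAddGroup G] (f : ℕ → G) :
    Tendsto (fun N : ℕ ↦ ∑' n : {k : ℕ // N ≤ k}, f n) atTop (𝓝 0) := by
  refine ((tendsto_tsum_compl_atTop_zero f).comp tendsto_finset_range).congr fun N ↦ ?_
  exact (Equiv.subtypeEquivRight fun k ↦ by simp).tsum_eq (fun n : {k : ℕ // N ≤ k} ↦ f n)

lemma sqrt_pow_three_mul_div_le_sq {x j : ℝ} (hx : 1 ≤ x) (hj : 1 ≤ j) :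
    √(x ^ 3 * (j + 1)) / (j * √π) ≤ x ^ 2 := by
  rw [div_le_iff₀ (by positivity), sqrt_le_left (by positivity), mul_pow, mul_pow,
    sq_sqrt pi_pos.le]
  have hjπ : j + 1 ≤ j ^ 2 * π := by nlinarith [two_le_pi]
  have hx34 : x ^ 3 ≤ (x ^ 2) ^ 2 := by
    rw [← pow_mul]; exact pow_le_pow_right₀ hx (by norm_num)
  calc x ^ 3 * (j + 1) ≤ (x ^ 2) ^ 2 * (j ^ 2 * π) := by gcongr
    _ = _ := by ring

lemma neg_sq_mul_div_le {x y j : ℝ} (hx : 0 ≤ x) (hyx : y ≤ x) (hj : 1 ≤ j) :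
    -(j ^ 2 * x) / (16 * (j + 1)) ≤ -(1 / 64) * x + -(j * y) / 64 := by
  rw [div_le_iff₀ (by positivity)]
  nlinarith [mul_nonneg (sub_nonneg.2 hj) hx, mul_nonneg (sub_nonneg.2 hj) (sub_nonneg.2 hyx),
    mul_nonneg (mul_nonneg (sub_nonneg.2 hj) (sub_nonneg.2 hj)) hx]

lemma lemma13_summand_le {x y j : ℝ} (hx : 1 ≤ x) (hyx : y ≤ x) (hj : 1 ≤ j) :
    8 * √(x ^ 3 * (j + 1)) / (j * √π) * exp (-(j ^ 2 * x) / (16 * (j + 1))) ≤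
      8 * (x ^ 2 * exp (-(1 / 64) * x)) * exp (-(j * y) / 64) := by
  calc 8 * √(x ^ 3 * (j + 1)) / (j * √π) * exp (-(j ^ 2 * x) / (16 * (j + 1)))
      ≤ 8 * x ^ 2 * exp (-(1 / 64) * x + -(j * y) / 64) := by
        rw [mul_div_assoc]
        gcongr
        · exact sqrt_pow_three_mul_div_le_sq hx hj
        · exact neg_sq_mul_div_le (by linarith) hyx hj
    _ = _ := by rw [exp_add]; ring

/-- The summation estimate in the proof of Lemma 13 (with `S = j`, `T = j + 1`): for `N`
large, uniformly in `j ≥ 1`,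
`∑_{n ≥ N} (8 √(n³(j+1)) / (j √π)) exp(−j²n/(16(j+1))) ≤ exp(−jN/64)`. -/
theorem lemma13_summation_estimate :
    ∃ N₀ : ℕ, ∀ N : ℕ, N₀ ≤ N → ∀ j : ℝ, 1 ≤ j →
      (∑' n : {k : ℕ // N ≤ k},
          8 * Real.sqrt (((n : ℕ) : ℝ) ^ 3 * (j + 1)) / (j * Real.sqrt Real.pi) *
            Real.exp (-(j ^ 2 * ((n : ℕ) : ℝ)) / (16 * (j + 1)))) ≤
        Real.exp (-(j * N) / 64) := by
  set g : ℕ → ℝ := fun n ↦ n ^ 2 * exp (-(1 / 64) * n)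
  have hg : Summable g := summable_pow_mul_exp_neg_nat_mul 2 (by norm_num)
  obtain ⟨N₀, hN₀⟩ := eventually_atTop.1 <| (tendsto_tsum_subtype_le_atTop_zero g).eventually
    (eventually_le_nhds (by norm_num : (0 : ℝ) < 1 / 8))
  refine ⟨max N₀ 1, fun N hN j hj ↦ ?_⟩
  have hbound (n : {k : ℕ // N ≤ k}) := lemma13_summand_le (x := n) (y := N) (j := j)
    (by exact_mod_cast (le_of_max_le_right hN).trans n.2) (by exact_mod_cast n.2) hj
  have hmajorant : Summable fun n : {k : ℕ // N ≤ k} ↦ 8 * g n * exp (-(j * N) / 64) :=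
    ((hg.subtype _).mul_left 8).mul_right _
  calc _ ≤ ∑' n : {k : ℕ // N ≤ k}, 8 * g n * exp (-(j * N) / 64) :=
        (hmajorant.of_nonneg_of_le (fun _ ↦ by positivity) hbound).tsum_le_tsum hbound hmajorant
    _ = 8 * (∑' n : {k : ℕ // N ≤ k}, g n) * exp (-(j * N) / 64) := by
        rw [tsum_mul_right, tsum_mul_left]
    _ ≤ 8 * (1 / 8) * exp (-(j * N) / 64) := by
        gcongr
        exact hN₀ N (le_of_max_le_left hN)
    _ = _ := by ring
end
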